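/- arXiv:1904.02587 — 4 statements merged into one kernel-verified Lean document; each statement's English description precedes it below -/
import Mathlib

section
/- Let F(x,y;Λ) be a polynomial with real coefficients in plane variables (x,y) and parameters Λ=(Λ₁,…,Λ_t), t ≥ 1, of the form F(x,y;Λ) = Σ_{0≤i+j≤d} x^i y^j g_{ij}(Λ) where each g_{ij}(Λ) is a polynomial of total degree at most 1 in Λ (the parameters occur linearly). Let U ⊆ ℝ^t and assume the family 𝓕 = {C_λ}_{λ∈U} satisfies the standing assumptions. Then the following two conditions are equivalent: (1) for every λ ∈ U there exist t real points p₁,…,p_t ∈ C_λ \ B_aff such that the affine-linear polynomials f_{p₁}(Λ),…,f_{p_t}(Λ) are linearly independent over ℝ; (2) the family 𝓕 is Hough regular and, for such points p₁,…,p_t, one has ⋂_{p∈C_λ} Γ_p(𝓕) = ⋂_{j=1}^{t} Γ_{p_j}(𝓕) = {λ}. -/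
/-!
Since the parameters occur linearly, every Hough polynomial `f_p(Λ)` is affine in `Λ`, and
`λ ∈ Γ_p` exactly when `p ∈ C_λ`. If `t` linearly independent affine polynomials in `t` variables
vanish at `λ`, then their linear parts are linearly independent too (a combination with zero
linear part is a constant vanishing at `λ`), so their common zero `λ` is unique. Hence
`⋂_j Γ_{p_j} = {λ}`; this set contains `⋂_{p ∈ C_λ} Γ_p ∋ λ`, and `C_λ = C_λ'` puts `λ'` in every
`Γ_{p_j}`, which is Hough regularity.
-/

open MvPolynomial

noncomputable section

/-- `fLam F lam` is the plane polynomial `f_λ(x,y) = F(x,y;λ)` obtained by evaluating the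
parameter variables of `F` at `λ`. -/
def fLam {t : ℕ} (F : MvPolynomial (Fin 2) (MvPolynomial (Fin t) ℝ)) (lam : Fin t → ℝ) :
    MvPolynomial (Fin 2) ℝ :=
  MvPolynomial.map (MvPolynomial.eval lam) F

/-- `houghPoly F p` is the polynomial `f_p(Λ) = F(x_p,y_p;Λ)` in the parameters. -/
def houghPoly {t : ℕ} (F : MvPolynomial (Fin 2) (MvPolynomial (Fin t) ℝ)) (p : Fin 2 → ℝ) :
    MvPolynomial (Fin t) ℝ :=
  MvPolynomial.eval₂ (RingHom.id _) (fun i => MvPolynomial.C (p i)) F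

/-- The Hough transform `Γ_p(𝓕) = {λ ∈ ℝ^t : f_p(λ) = 0}`. -/
def Gamma {t : ℕ} (F : MvPolynomial (Fin 2) (MvPolynomial (Fin t) ℝ)) (p : Fin 2 → ℝ) :
    Set (Fin t → ℝ) :=
  {mu | MvPolynomial.eval mu (houghPoly F p) = 0}

/-- The curve `C_λ = {(x,y) ∈ ℝ² : f_λ(x,y) = 0}`. -/
def Curve {t : ℕ} (F : MvPolynomial (Fin 2) (MvPolynomial (Fin t) ℝ)) (lam : Fin t → ℝ) :
    Set (Fin 2 → ℝ) :=
  {p | MvPolynomial.eval p (fLam F lam) = 0}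

/-- The affine base locus `B_aff = {p ∈ ℂ² : f_λ(p) = 0 for all λ ∈ U}`. -/
def Baff {t : ℕ} (F : MvPolynomial (Fin 2) (MvPolynomial (Fin t) ℝ)) (U : Set (Fin t → ℝ)) :
    Set (Fin 2 → ℂ) :=
  {q | ∀ lam ∈ U, MvPolynomial.aeval q (fLam F lam) = 0}

/-- The family `𝓕 = {C_λ}` is Hough regular if `C_λ = C_λ'` implies `λ = λ'` for `λ, λ' ∈ U`. -/
def HoughRegular {t : ℕ} (F : MvPolynomial (Fin 2) (MvPolynomial (Fin t) ℝ))
    (U : Set (Fin t → ℝ)) : Prop :=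
  ∀ lam ∈ U, ∀ lam' ∈ U, Curve F lam = Curve F lam' → lam = lam'

namespace MvPolynomial

section CommSemiring

variable {σ R : Type*} [CommSemiring R]

theorem eq_C_add_sum_C_mul_X_of_totalDegree_le_one [Fintype σ] {p : MvPolynomial σ R}
    (hp : p.totalDegree ≤ 1) :
    p = C (coeff 0 p) + ∑ i, C (coeff (Finsupp.single i 1) p) * X i := by
  classical
  ext m
  simp only [coeff_add, coeff_C, coeff_sum, coeff_C_mul, coeff_X]
  obtain h0 | h1 | h2 : m.degree = 0 ∨ m.degree = 1 ∨ 1 < m.degree := by omega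
  · obtain rfl := (Finsupp.degree_eq_zero_iff m).mp h0
    simp
  · obtain ⟨a, rfl⟩ := (Finsupp.sum_eq_one_iff m).mp h1
    simp [Finsupp.single_left_inj, eq_comm (a := (0 : σ →₀ ℕ))]
  · have hm0 : m ≠ 0 := by rintro rfl; simp at h2
    have hm1 : ∀ i, Finsupp.single i 1 ≠ m := by rintro i rfl; simp at h2
    simp [coeff_eq_zero_of_totalDegree_lt (hp.trans_lt h2), hm0.symm, hm1]

theorem eval_eq_of_totalDegree_le_one [Fintype σ] {p : MvPolynomial σ R} (hp : p.totalDegree ≤ 1)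
    (x : σ → R) : eval x p = coeff 0 p + ∑ i, coeff (Finsupp.single i 1) p * x i := by
  conv_lhs => rw [eq_C_add_sum_C_mul_X_of_totalDegree_le_one hp]
  simp

def linearCoeffs : MvPolynomial σ R →ₗ[R] σ → R :=
  LinearMap.pi fun i => lcoeff R (Finsupp.single i 1)

@[simp]
theorem linearCoeffs_apply (p : MvPolynomial σ R) (i : σ) :
    linearCoeffs p i = coeff (Finsupp.single i 1) p := rfl

end CommSemiring

section Field

variable {σ ι K : Type*} [Fintype σ] [Field K]

theorem linearIndependent_linearCoeffs {l : ι → MvPolynomial σ K} (hli : LinearIndependent K l)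
    (hl : ∀ j, (l j).totalDegree ≤ 1) {x : σ → K} (hx : ∀ j, eval x (l j) = 0) :
    LinearIndependent K (linearCoeffs ∘ l) := by
  let S := restrictTotalDegree σ K 1 ⊓ LinearMap.ker (aeval x).toLinearMap
  have hspan : Submodule.span K (Set.range l) ≤ S := by
    rw [Submodule.span_le]
    rintro _ ⟨j, rfl⟩
    exact ⟨(mem_restrictTotalDegree _ _ _).mpr (hl j), by simpa [coe_aeval_eq_eval] using hx j⟩
  refine hli.map (Disjoint.mono_left hspan (Submodule.disjoint_def.mpr ?_))
  rintro p ⟨hdeg, heval⟩ hker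
  rw [SetLike.mem_coe, mem_restrictTotalDegree] at hdeg
  have hlin : ∀ i, coeff (Finsupp.single i 1) p = 0 := fun i => congrFun hker i
  have hconst : coeff 0 p = 0 := by
    simpa [coe_aeval_eq_eval, eval_eq_of_totalDegree_le_one hdeg, hlin] using heval
  rw [eq_C_add_sum_C_mul_X_of_totalDegree_le_one hdeg]
  simp [hconst, hlin]

theorem eq_of_forall_eval_eq_zero_of_linearIndependent [DecidableEq σ]
    {l : σ → MvPolynomial σ K} (hli : LinearIndependent K l) (hl : ∀ j, (l j).totalDegree ≤ 1)
    {x y : σ → K} (hx : ∀ j, eval x (l j) = 0) (hy : ∀ j, eval y (l j) = 0) : x = y := by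
  let M : Matrix σ σ K := Matrix.of (linearCoeffs ∘ l)
  have hM : IsUnit M :=
    Matrix.linearIndependent_rows_iff_isUnit.mp (linearIndependent_linearCoeffs hli hl hx)
  refine Matrix.mulVec_injective_iff_isUnit.mpr hM ?_
  ext j
  have hxj := eval_eq_of_totalDegree_le_one (hl j) x
  have hyj := eval_eq_of_totalDegree_le_one (hl j) y
  simp only [Matrix.mulVec, dotProduct, M, Matrix.of_apply, Function.comp_apply, linearCoeffs_apply]
  linear_combination hyj - hxj - hy j + hx j

end Field

end MvPolynomial

section Hough

variable {t : ℕ} (F : MvPolynomial (Fin 2) (MvPolynomial (Fin t) ℝ))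

theorem eval_houghPoly (p : Fin 2 → ℝ) (mu : Fin t → ℝ) :
    eval mu (houghPoly F p) = eval p (fLam F mu) := by
  rw [houghPoly, fLam, eval_map, eval₂_comp_left (eval mu)]
  congr 1
  funext i
  simp

variable {F}

theorem mem_Gamma_iff {p : Fin 2 → ℝ} {mu : Fin t → ℝ} : mu ∈ Gamma F p ↔ p ∈ Curve F mu := by
  rw [Gamma, Curve, Set.mem_ofPred_eq, Set.mem_ofPred_eq, eval_houghPoly]

theorem totalDegree_houghPoly_le_one (hlin : ∀ m : Fin 2 →₀ ℕ, (F.coeff m).totalDegree ≤ 1)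
    (p : Fin 2 → ℝ) : (houghPoly F p).totalDegree ≤ 1 := by
  rw [houghPoly, eval₂_eq]
  refine (totalDegree_finsetSum _ _).trans (Finset.sup_le fun m _ => ?_)
  refine (totalDegree_mul _ _).trans ?_
  simp only [RingHom.id_apply, ← map_pow, ← map_prod, totalDegree_C, add_zero]
  exact hlin m

theorem iInter_Gamma_eq_singleton (hlin : ∀ m : Fin 2 →₀ ℕ, (F.coeff m).totalDegree ≤ 1)
    {lam : Fin t → ℝ} {p : Fin t → Fin 2 → ℝ} (hp : ∀ j, p j ∈ Curve F lam)
    (hli : LinearIndependent ℝ fun j => houghPoly F (p j)) :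
    ⋂ j, Gamma F (p j) = {lam} := by
  ext mu
  simp only [Set.mem_iInter, Set.mem_singleton_iff]
  refine ⟨fun hmu => ?_, fun hmu j => hmu ▸ mem_Gamma_iff.mpr (hp j)⟩
  exact eq_of_forall_eval_eq_zero_of_linearIndependent hli
    (fun j => totalDegree_houghPoly_le_one hlin (p j)) hmu fun j => mem_Gamma_iff.mpr (hp j)

end Hough

theorem statement0_general (t : ℕ)
    (F : MvPolynomial (Fin 2) (MvPolynomial (Fin t) ℝ)) (U : Set (Fin t → ℝ))
    -- the parameters occur linearly: every coefficient `g_{ij}(Λ)` has total degree ≤ 1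
    (hlin : ∀ m : Fin 2 →₀ ℕ, (F.coeff m).totalDegree ≤ 1) :
    (∀ lam ∈ U, ∃ p : Fin t → (Fin 2 → ℝ),
        (∀ j, p j ∈ Curve F lam ∧ (fun i => ((p j i : ℝ) : ℂ)) ∉ Baff F U) ∧
        LinearIndependent ℝ (fun j => houghPoly F (p j)))
    ↔
    (HoughRegular F U ∧ ∀ lam ∈ U, ∃ p : Fin t → (Fin 2 → ℝ),
        (∀ j, p j ∈ Curve F lam ∧ (fun i => ((p j i : ℝ) : ℂ)) ∉ Baff F U) ∧
        LinearIndependent ℝ (fun j => houghPoly F (p j)) ∧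
        (⋂ q ∈ Curve F lam, Gamma F q) = (⋂ j, Gamma F (p j)) ∧
        (⋂ j, Gamma F (p j)) = {lam}) := by
  refine ⟨fun h => ⟨fun lam hlam lam' _ hcurve => ?_, fun lam hlam => ?_⟩, ?_⟩
  · obtain ⟨p, hp, hli⟩ := h lam hlam
    have hlam' : lam' ∈ ⋂ j, Gamma F (p j) :=
      Set.mem_iInter.mpr fun j => mem_Gamma_iff.mpr (hcurve ▸ (hp j).1)
    rw [iInter_Gamma_eq_singleton hlin (fun j => (hp j).1) hli] at hlam'
    exact hlam'.symm
  · obtain ⟨p, hp, hli⟩ := h lam hlam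
    have hsingle := iInter_Gamma_eq_singleton hlin (fun j => (hp j).1) hli
    refine ⟨p, hp, hli, subset_antisymm ?_ ?_, hsingle⟩
    · exact Set.subset_iInter fun j => Set.biInter_subset_of_mem (hp j).1
    · rw [hsingle, Set.singleton_subset_iff]
      exact Set.mem_iInter₂.mpr fun q hq => mem_Gamma_iff.mpr hq
  · rintro ⟨-, h⟩ lam hlam
    obtain ⟨p, hp, hli, -⟩ := h lam hlam
    exact ⟨p, hp, hli⟩

/-- Lemma on linearly occurring parameters.
If the parameters occur linearly in `F`, then the following are equivalent:
(1) for every `λ ∈ U` there are `t` real points of `C_λ \ B_aff` whose Hough polynomials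
are linearly independent over `ℝ`;
(2) the family is Hough regular and, for such points, `⋂_{p∈C_λ} Γ_p = ⋂_{j=1}^t Γ_{p_j} = {λ}`. -/
theorem statement0 (t d : ℕ) (ht : 1 ≤ t) (hd : 0 < d)
    (F : MvPolynomial (Fin 2) (MvPolynomial (Fin t) ℝ)) (U : Set (Fin t → ℝ))
    -- the parameters occur linearly: every coefficient `g_{ij}(Λ)` has total degree ≤ 1
    (hlin : ∀ m : Fin 2 →₀ ℕ, (F.coeff m).totalDegree ≤ 1)
    -- standing assumptions
    (hstand : ∀ lam ∈ U, (fLam F lam).totalDegree = d ∧ Irreducible (fLam F lam) ∧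
      (Curve F lam).Infinite) :
    (∀ lam ∈ U, ∃ p : Fin t → (Fin 2 → ℝ),
        (∀ j, p j ∈ Curve F lam ∧ (fun i => ((p j i : ℝ) : ℂ)) ∉ Baff F U) ∧
        LinearIndependent ℝ (fun j => houghPoly F (p j)))
    ↔
    (HoughRegular F U ∧ ∀ lam ∈ U, ∃ p : Fin t → (Fin 2 → ℝ),
        (∀ j, p j ∈ Curve F lam ∧ (fun i => ((p j i : ℝ) : ℂ)) ∉ Baff F U) ∧
        LinearIndependent ℝ (fun j => houghPoly F (p j)) ∧
        (⋂ q ∈ Curve F lam, Gamma F q) = (⋂ j, Gamma F (p j)) ∧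
        (⋂ j, Gamma F (p j)) = {lam}) :=
  statement0_general t F U hlin

end
end

section
/- Let K = ℝ or ℂ and let f₁,…,f_ν ∈ K[Λ₁,…,Λ_t] be nonzero polynomials all of the same total degree h, with homogenizations f₁^hom,…,f_ν^hom ∈ K[Λ₀,Λ₁,…,Λ_t] (homogenized with respect to a new variable Λ₀). Let 𝒮 be the union of the supports of the f_j^hom, with s := #𝒮, and let M ∈ Mat_{ν×s}(K) be the matrix whose j-th row lists the coefficients of f_j^hom on the monomials of 𝒮 (in a fixed order). Then the smallest positive integer k ≤ ν for which there exist indices 1 ≤ j₁ < ⋯ < j_k ≤ ν with (f₁^hom,…,f_ν^hom) = (f_{j₁}^hom,…,f_{j_k}^hom) as ideals of K[Λ₀,Λ₁,…,Λ_t] is equal to the rank of M. -/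
/-! The homogenizations `g j` are homogeneous of degree `h`, and an ideal generated by forms of
degree `h` meets the degree-`h` forms exactly in their `K`-span: the degree-`h` part of `r * q`
is `r(0) • q`. Hence `(g_1, …, g_ν) = (g_j)_{j ∈ J}` iff every `g i` is a `K`-combination of the
`g j` with `j ∈ J`. Listing coefficients on `𝒮` embeds the `K`-span of the `g j` isomorphically
onto the row space of `M`, and the least size of a spanning subfamily of a family of vectors,
not all zero, is the dimension of their span. -/

open MvPolynomial

noncomputable section

/-- The homogenization `f^hom ∈ K[Λ₀,Λ₁,…,Λ_t]` of a polynomial `f ∈ K[Λ₁,…,Λ_t]` of total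
degree `h`, with respect to the new variable `Λ₀` (encoded as `none` in `Option (Fin t)`):
each monomial of `f` is multiplied by the power of `Λ₀` raising its degree to `h`. -/
def homogenize {K : Type*} [CommSemiring K] {t : ℕ} (h : ℕ) (f : MvPolynomial (Fin t) K) :
    MvPolynomial (Option (Fin t)) K :=
  f.support.sum fun m =>
    MvPolynomial.monomial
      (Finsupp.equivFunOnFinite.symm fun o => o.elim (h - m.sum fun _ n => n) m)
      (f.coeff m)

section Homogenize

variable {R : Type*} [CommSemiring R] {t : ℕ}

def homogenizeExponent (h : ℕ) (m : Fin t →₀ ℕ) : Option (Fin t) →₀ ℕ :=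
  Finsupp.equivFunOnFinite.symm fun o => o.elim (h - m.sum fun _ n => n) m

@[simp]
lemma homogenizeExponent_none (h : ℕ) (m : Fin t →₀ ℕ) :
    homogenizeExponent h m none = h - m.sum fun _ n => n := rfl

@[simp]
lemma homogenizeExponent_some (h : ℕ) (m : Fin t →₀ ℕ) (i : Fin t) :
    homogenizeExponent h m (some i) = m i := rfl

lemma homogenizeExponent_injective (h : ℕ) :
    Function.Injective (homogenizeExponent (t := t) h) := fun m m' he =>
  Finsupp.ext fun i => by simpa using DFunLike.congr_fun he (some i)

lemma degree_homogenizeExponent {h : ℕ} {m : Fin t →₀ ℕ} (hm : (m.sum fun _ n => n) ≤ h) :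
    (homogenizeExponent h m).degree = h := by
  have hsum : (m.sum fun _ n => n) = ∑ i, m i := Finsupp.sum_fintype _ _ fun _ => rfl
  rw [Finsupp.degree_eq_sum, Fintype.sum_option]
  simp only [homogenizeExponent_none, homogenizeExponent_some]
  omega

lemma homogenize_eq (h : ℕ) (f : MvPolynomial (Fin t) R) :
    homogenize h f = ∑ m ∈ f.support, monomial (homogenizeExponent h m) (coeff m f) := rfl

@[simp]
lemma coeff_homogenizeExponent_homogenize (h : ℕ) (f : MvPolynomial (Fin t) R)
    (m : Fin t →₀ ℕ) : coeff (homogenizeExponent h m) (homogenize h f) = coeff m f := by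
  classical
  simp only [homogenize_eq, coeff_sum, coeff_monomial, (homogenizeExponent_injective h).eq_iff]
  simp [eq_comm]

lemma homogenize_ne_zero {f : MvPolynomial (Fin t) R} (h : ℕ) (hf : f ≠ 0) :
    homogenize h f ≠ 0 := by
  obtain ⟨m, hm⟩ := ne_zero_iff.mp hf
  exact ne_zero_iff.mpr ⟨homogenizeExponent h m, by simpa using hm⟩

lemma isHomogeneous_homogenize {h : ℕ} {f : MvPolynomial (Fin t) R} (hf : f.totalDegree ≤ h) :
    (homogenize h f).IsHomogeneous h :=
  IsHomogeneous.sum _ _ _ fun _ hm =>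
    isHomogeneous_monomial _ (degree_homogenizeExponent ((le_totalDegree hm).trans hf))

end Homogenize

section HomogeneousIdeal

variable {σ R : Type*} [CommSemiring R]

attribute [local instance] MvPolynomial.gradedAlgebra in
lemma homogeneousComponent_mul_of_isHomogeneous {n : ℕ} {q : MvPolynomial σ R}
    (hq : q.IsHomogeneous n) (r : MvPolynomial σ R) :
    homogeneousComponent n (r * q) = C (coeff 0 r) * q := by
  have := DirectSum.coe_decompose_mul_of_right_mem (homogeneousSubmodule σ R) n (a := r) hq
  rw [if_pos le_rfl, Nat.sub_self] at this
  rw [← homogeneousComponent_zero, ← decomposition.decompose'_apply,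
    ← decomposition.decompose'_apply]
  exact this

lemma homogeneousComponent_mem_span_of_mem_ideal_span {ι : Type*} [Fintype ι] {n : ℕ}
    {g : ι → MvPolynomial σ R} (hg : ∀ i, (g i).IsHomogeneous n) {p : MvPolynomial σ R}
    (hp : p ∈ Ideal.span (Set.range g)) :
    homogeneousComponent n p ∈ Submodule.span R (Set.range g) := by
  obtain ⟨c, rfl⟩ := Ideal.mem_span_range_iff_exists_fun.mp hp
  simp only [map_sum, homogeneousComponent_mul_of_isHomogeneous (hg _), ← smul_eq_C_mul]
  exact Submodule.sum_mem _ fun i _ => Submodule.smul_mem _ _ (Submodule.subset_span ⟨i, rfl⟩)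

lemma ideal_span_range_eq_iff {ι : Type*} [Finite ι] {n : ℕ}
    {g : ι → MvPolynomial σ R} (hg : ∀ i, (g i).IsHomogeneous n) (J : Set ι) :
    Ideal.span (Set.range g) = Ideal.span (g '' J) ↔ Set.range g ⊆ Submodule.span R (g '' J) := by
  constructor
  · rintro heq _ ⟨i, rfl⟩
    have := Fintype.ofFinite J
    have hmem : g i ∈ Ideal.span (Set.range fun j : J => g j) := by
      rw [← Set.image_eq_range, ← heq]; exact Ideal.subset_span ⟨i, rfl⟩
    simpa [homogeneousComponent_eq_self (hg i), Set.image_eq_range] using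
      homogeneousComponent_mem_span_of_mem_ideal_span (fun j : J => hg j) hmem
  · intro hsub
    refine le_antisymm (Ideal.span_le.mpr fun x hx => ?_)
      (Ideal.span_mono (Set.image_subset_range _ _))
    exact Submodule.span_le_restrictScalars R (MvPolynomial σ R) _ (hsub hx)

end HomogeneousIdeal

open Module Submodule

section SpanningSubfamily

variable {K V ι : Type*} [DivisionRing K] [AddCommGroup V] [Module K V]

lemma finrank_span_range_le_card_of_subset_span {v : ι → V} {J : Finset ι}
    (hJ : Set.range v ⊆ span K (v '' J)) : finrank K (span K (Set.range v)) ≤ J.card := by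
  classical
  rw [← Finset.coe_image] at hJ
  calc finrank K (span K (Set.range v))
      ≤ finrank K (span K (J.image v : Set V)) := Submodule.finrank_mono (span_le.mpr hJ)
    _ ≤ (J.image v).card := finrank_span_finset_le_card _
    _ ≤ J.card := Finset.card_image_le

lemma exists_finset_card_eq_finrank_span_range [Finite ι] (v : ι → V) :
    ∃ J : Finset ι, J.card = finrank K (span K (Set.range v)) ∧
      Set.range v ⊆ span K (v '' J) := by
  classical
  cases nonempty_fintype ι
  obtain ⟨b, -, -, hspan, hli⟩ :=
    exists_linearIndepOn_extension (linearIndepOn_empty K v) (Set.empty_subset Set.univ)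
  rw [Set.image_univ] at hspan
  refine ⟨b.toFinset, ?_, by simpa using hspan⟩
  have hspan_eq : span K (Set.range v) = span K (Set.range fun i : b => v i) := by
    rw [← Set.image_eq_range]
    exact le_antisymm (span_le.mpr hspan) (span_mono (Set.image_subset_range _ _))
  rw [hspan_eq, finrank_span_eq_card hli, Set.toFinset_card]

lemma isLeast_card_spanning_subfamily [Finite ι] {v : ι → V} (hv : ∃ i, v i ≠ 0) :
    IsLeast {k | 0 < k ∧ ∃ J : Finset ι, J.card = k ∧ Set.range v ⊆ span K (v '' J)}
      (finrank K (span K (Set.range v))) := by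
  obtain ⟨J, hcard, hJ⟩ := exists_finset_card_eq_finrank_span_range (K := K) v
  refine ⟨⟨?_, J, hcard, hJ⟩, fun k ⟨_, J', hcard', hJ'⟩ => ?_⟩
  · obtain ⟨i, hi⟩ := hv
    have := FiniteDimensional.span_of_finite K (Set.finite_range v)
    refine Submodule.one_le_finrank_iff.mpr fun hbot => hi ?_
    exact (mem_bot K).mp (hbot ▸ subset_span ⟨i, rfl⟩)
  · exact hcard' ▸ finrank_span_range_le_card_of_subset_span hJ'

end SpanningSubfamily

lemma rank_eq_finrank_span_of_coeff_eq {K σ ι : Type*} [Field K] [Finite ι]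
    {S : Finset (σ →₀ ℕ)} {g : ι → MvPolynomial σ K} (hg : ∀ i, (g i).support ⊆ S)
    {M : Matrix ι S K} (hM : ∀ i s, M i s = coeff s.1 (g i)) :
    M.rank = finrank K (span K (Set.range g)) := by
  let toPoly := Fintype.linearCombination K fun s : S => monomial s.1 (1 : K)
  have hinj : Function.Injective toPoly :=
    ((basisMonomials σ K).linearIndependent.comp _
      Subtype.val_injective).fintypeLinearCombination_injective
  have hrow : ∀ i, toPoly (M.row i) = g i := fun i => by
    classical
    simp only [toPoly, Fintype.linearCombination_apply, Matrix.row_apply, hM, smul_monomial,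
      smul_eq_mul, mul_one]
    rw [Finset.sum_coe_sort S fun s => monomial s (coeff s (g i)), ← Finset.sum_subset (hg i)]
    · exact support_sum_monomial_coeff (g i)
    · intro s _ hs; rw [notMem_support_iff.mp hs, monomial_zero]
  have hspan : span K (Set.range g) = (span K (Set.range M.row)).map toPoly := by
    rw [map_span, ← Set.range_comp]; congr; ext1 i; exact (hrow i).symm
  rw [Matrix.rank_eq_finrank_span_row, hspan, (equivMapOfInjective _ hinj _).finrank_eq]

/-- For nonzero polynomials `f₁,…,f_ν ∈ K[Λ₁,…,Λ_t]` of the same total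
degree `h`, the smallest positive integer `k` for which some `k` of the homogenizations
generate the ideal of all of them equals the rank of the associated HT-matrix `M`. -/
theorem statement5 {K : Type*} [Field K] (t ν h : ℕ) (hν : 0 < ν)
    (f : Fin ν → MvPolynomial (Fin t) K)
    (hne : ∀ j, f j ≠ 0) (hdeg : ∀ j, (f j).totalDegree = h)
    -- the generic ordered support 𝒮 (union of the supports of the homogenizations)
    (S : Finset ((Option (Fin t)) →₀ ℕ))
    (hS : ∀ m : (Option (Fin t)) →₀ ℕ,
      m ∈ S ↔ ∃ j, m ∈ (homogenize h (f j)).support)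
    -- the HT-matrix: rows are the coefficient vectors of the homogenizations on 𝒮
    (M : Matrix (Fin ν) {m // m ∈ S} K)
    (hM : ∀ j (s : {m // m ∈ S}), M j s = (homogenize h (f j)).coeff s.val) :
    IsLeast {k : ℕ | 0 < k ∧ ∃ J : Finset (Fin ν), J.card = k ∧
        Ideal.span (Set.range fun j => homogenize h (f j)) =
          Ideal.span ((fun j => homogenize h (f j)) '' ↑J)}
      M.rank := by
  set g := fun j => homogenize h (f j)
  have hg_hom : ∀ j, (g j).IsHomogeneous h := fun j => isHomogeneous_homogenize (hdeg j).le
  have hrank : M.rank = finrank K (span K (Set.range g)) :=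
    rank_eq_finrank_span_of_coeff_eq (fun j m hm => (hS m).mpr ⟨j, hm⟩) hM
  simp_rw [ideal_span_range_eq_iff hg_hom, hrank]
  exact isLeast_card_spanning_subfamily ⟨⟨0, hν⟩, homogenize_ne_zero h (hne _)⟩

end
end

section
/- Let F(x,y;Λ) be a polynomial with real coefficients in plane variables (x,y) and parameters Λ=(Λ₁,…,Λ_t), fix λ ∈ ℝ^t, and let C_λ := {(x,y) ∈ ℝ² : F(x,y;λ) = 0}. Then there exists a finite subset S ⊆ C_λ such that ⋂_{p∈C_λ} Γ_p(𝓕) = ⋂_{p∈S} Γ_p(𝓕), where Γ_p(𝓕) := {μ ∈ ℝ^t : F(p;μ) = 0}. -/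
/-! By the Hilbert basis theorem, the ideal of `ℝ[Λ]` generated by the polynomials `f_p`,
`p ∈ C_λ`, is generated by finitely many of them. A parameter `μ` at which these finitely many
vanish lies in the zero set of the whole ideal, hence in every `Γ_p`. -/

open MvPolynomial

noncomputable section

theorem Ideal.exists_finite_subset_forall_image_subset_iff {R ι : Type*} [CommSemiring R]
    [IsNoetherianRing R] (f : ι → R) (s : Set ι) :
    ∃ u ⊆ s, u.Finite ∧ ∀ I : Ideal R, f '' u ⊆ I ↔ f '' s ⊆ I := by
  classical
  obtain ⟨T, hTs, hspan⟩ :=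
    (Submodule.fg_span_iff_fg_span_finset_subset (f '' s)).mp (Ideal.fg_of_isNoetherianRing _)
  obtain ⟨u, hus, rfl⟩ := Finset.subset_set_image_iff.mp hTs
  rw [Finset.coe_image] at hspan
  refine ⟨u, hus, u.finite_toSet, fun I => ?_⟩
  rw [← Ideal.span_le, ← Ideal.span_le (s := f '' s), Ideal.span, Ideal.span, hspan]

theorem mem_biInter_Gamma_iff {t : ℕ} (F : MvPolynomial (Fin 2) (MvPolynomial (Fin t) ℝ))
    (s : Set (Fin 2 → ℝ)) (mu : Fin t → ℝ) :
    mu ∈ ⋂ p ∈ s, Gamma F p ↔ houghPoly F '' s ⊆ RingHom.ker (MvPolynomial.eval mu) := by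
  simp only [Set.mem_iInter₂, Set.image_subset_iff]
  rfl

/-- reduction to a finite intersection. There is a finite subset
`S ⊆ C_λ` with `⋂_{p∈C_λ} Γ_p(𝓕) = ⋂_{p∈S} Γ_p(𝓕)`. -/
theorem statement11 (t : ℕ)
    (F : MvPolynomial (Fin 2) (MvPolynomial (Fin t) ℝ)) (lam : Fin t → ℝ) :
    ∃ S : Set (Fin 2 → ℝ), S.Finite ∧ S ⊆ Curve F lam ∧
      (⋂ p ∈ Curve F lam, Gamma F p) = ⋂ p ∈ S, Gamma F p := by
  obtain ⟨S, hSC, hS, hgen⟩ :=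
    Ideal.exists_finite_subset_forall_image_subset_iff (houghPoly F) (Curve F lam)
  refine ⟨S, hS, hSC, Set.ext fun mu => ?_⟩
  rw [mem_biInter_Gamma_iff, mem_biInter_Gamma_iff, hgen]

end
end

section
/- Consider the family of quartic curves with a triple point C_{a,b} : y(x − ay)² − b(x² + y²)² = 0, indexed by real parameters a ∈ ℝ and b > 0, with projective closures x₁(x₀ − a x₁)² x₂ − b(x₀² + x₁²)² = 0 in ℙ²(ℂ). Then for every (x₀,x₁,x₂) ∈ ℂ³ \ {(0,0,0)}, one has x₁(x₀ − a x₁)² x₂ − b(x₀² + x₁²)² = 0 for all a ∈ ℝ and all b > 0 if and only if the point [x₀:x₁:x₂] is one of [0:0:1], [i:1:0], [−i:1:0]. Consequently #B(ℂ) = 3 and ν_opt = d² − #B(ℂ) + 1 = 16 − 3 + 1 = 14. -/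
/-!
Taking `a = 0` and `b = 1, 2` forces `x₀² + x₁² = 0`, hence `x₁ x₀² x₂ = -x₁³ x₂ = 0`;
conversely `x₀² + x₁² = 0` and `x₁ x₂ = 0` kill both terms of every member of the family.
These two equations say that either `x₁ = 0 = x₀`, the point `[0:0:1]`, or `x₂ = 0` and
`x₀ = ±i x₁`.
-/

noncomputable section

/-- The base locus in `ℙ²(ℂ)` of the family of projective quartics with a triple point
`x₁(x₀ − a x₁)² x₂ − b(x₀² + x₁²)² = 0`, `a ∈ ℝ`, `b > 0`. -/
def tripleQuarticBaseLocus : Set (Projectivization ℂ (Fin 3 → ℂ)) :=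
  {P | ∀ a b : ℝ, 0 < b →
    P.rep 1 * (P.rep 0 - (a : ℂ) * P.rep 1) ^ 2 * P.rep 2
      - (b : ℂ) * ((P.rep 0) ^ 2 + (P.rep 1) ^ 2) ^ 2 = 0}

open Projectivization Complex

lemma quartic_family_vanishes_iff (x y z : ℂ) :
    (∀ a b : ℝ, 0 < b → y * (x - a * y) ^ 2 * z - b * (x ^ 2 + y ^ 2) ^ 2 = 0) ↔
      x ^ 2 + y ^ 2 = 0 ∧ y * z = 0 := by
  constructor
  · intro h
    have h₁ := h 0 1 one_pos
    have h₂ := h 0 2 two_pos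
    push_cast at h₁ h₂
    have hS : x ^ 2 + y ^ 2 = 0 :=
      pow_eq_zero_iff two_ne_zero |>.mp (by linear_combination h₁ - h₂)
    have hyz : (y * z) ^ 3 = 0 := by
      linear_combination z ^ 2 * (-h₁ + (y * z - x ^ 2 - y ^ 2) * hS)
    exact ⟨hS, pow_eq_zero_iff three_ne_zero |>.mp hyz⟩
  · rintro ⟨hS, hyz⟩ a b -
    linear_combination (x - a * y) ^ 2 * hyz - b * (x ^ 2 + y ^ 2) * hS

lemma mk_eq_tripleQuarticBasePoint_iff (v : Fin 3 → ℂ) (hv : v ≠ 0) :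
    (mk ℂ v hv = mk ℂ ![0, 0, 1] (by simp) ∨
       mk ℂ v hv = mk ℂ ![I, 1, 0] (by simp) ∨
       mk ℂ v hv = mk ℂ ![-I, 1, 0] (by simp)) ↔
      v 0 ^ 2 + v 1 ^ 2 = 0 ∧ v 1 * v 2 = 0 := by
  simp only [mk_eq_mk_iff']
  constructor
  · rintro (⟨c, rfl⟩ | ⟨c, rfl⟩ | ⟨c, rfl⟩) <;> simp <;> ring_nf <;> simp [I_sq]
  · rintro ⟨hS, hyz⟩
    by_cases hy : v 1 = 0
    · have hx : v 0 = 0 := pow_eq_zero_iff two_ne_zero |>.mp (by simpa [hy] using hS)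
      exact Or.inl ⟨v 2, by ext i; fin_cases i <;> simp [hx, hy]⟩
    · have hz : v 2 = 0 := (mul_eq_zero.mp hyz).resolve_left hy
      have hfac : (v 0 - I * v 1) * (v 0 + I * v 1) = 0 := by
        linear_combination hS - v 1 ^ 2 * I_sq
      refine Or.inr ((mul_eq_zero.mp hfac).imp (fun h => ⟨v 1, ?_⟩) (fun h => ⟨v 1, ?_⟩)) <;>
        ext i <;> fin_cases i <;> simp [hz] <;> linear_combination -h

lemma tripleQuarticBaseLocus_eq :
    tripleQuarticBaseLocus =
      {mk ℂ ![0, 0, 1] (by simp), mk ℂ ![I, 1, 0] (by simp), mk ℂ ![-I, 1, 0] (by simp)} := by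
  ext P
  conv_rhs => rw [← mk_rep P]
  exact (quartic_family_vanishes_iff _ _ _).trans (mk_eq_tripleQuarticBasePoint_iff _ _).symm

lemma tripleQuarticBaseLocus_ncard : tripleQuarticBaseLocus.ncard = 3 := by
  rw [tripleQuarticBaseLocus_eq, Set.ncard_eq_three]
  refine ⟨_, _, _, ?_, ?_, ?_, rfl⟩ <;> rw [Ne, mk_eq_mk_iff'] <;> rintro ⟨c, hc⟩
  · simpa using congrFun hc 2
  · simpa using congrFun hc 2
  · have h₁ : c = 1 := by simpa using congrFun hc 1
    simpa [h₁, CharZero.neg_eq_self_iff] using congrFun hc 0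

/-- quartic with a triple point. A nonzero `(x₀,x₁,x₂) ∈ ℂ³` satisfies
`x₁(x₀ − a x₁)² x₂ − b(x₀² + x₁²)² = 0` for all `a ∈ ℝ` and all `b > 0` iff the point
`[x₀:x₁:x₂]` is one of `[0:0:1]`, `[i:1:0]`, `[−i:1:0]`; consequently `#B(ℂ) = 3` and
`ν_opt = 4² − 3 + 1 = 14`. -/
theorem statement13 :
    (∀ v : Fin 3 → ℂ, (hv : v ≠ 0) →
      ((∀ a b : ℝ, 0 < b →
          v 1 * (v 0 - (a : ℂ) * v 1) ^ 2 * v 2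
            - (b : ℂ) * ((v 0) ^ 2 + (v 1) ^ 2) ^ 2 = 0) ↔
        (Projectivization.mk ℂ v hv = Projectivization.mk ℂ (![0, 0, 1] : Fin 3 → ℂ)
            (by intro h; have := congrFun h 2; simp at this) ∨
         Projectivization.mk ℂ v hv = Projectivization.mk ℂ (![Complex.I, 1, 0] : Fin 3 → ℂ)
            (by intro h; have := congrFun h 1; simp at this) ∨
         Projectivization.mk ℂ v hv = Projectivization.mk ℂ (![-Complex.I, 1, 0] : Fin 3 → ℂ)
            (by intro h; have := congrFun h 1; simp at this)))) ∧
    tripleQuarticBaseLocus.ncard = 3 ∧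
    4 ^ 2 - tripleQuarticBaseLocus.ncard + 1 = 14 := by
  refine ⟨fun v hv => ?_, tripleQuarticBaseLocus_ncard, by simp [tripleQuarticBaseLocus_ncard]⟩
  exact (quartic_family_vanishes_iff _ _ _).trans (mk_eq_tripleQuarticBasePoint_iff v hv).symm

end
end
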